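/- Let r ≥ 2 and 1 ≤ k ≤ r be integers and let χ₁, χ₂ be integers such that χ := χ₁ + χ₂ − r < 0. Then there exists a polarization (w₁, w₂) (rational numbers with 0 < wᵢ < 1 and w₁ + w₂ = 1) satisfying χ·w₁ ≤ χ₁ ≤ χ·w₁ + k and χ·w₂ + r − k ≤ χ₂ ≤ χ·w₂ + r, if and only if χ₁ < k and χ₂ < r. -/

import Mathlib

/-! Put `w₂ = 1 - w₁` and `t = χ·w₁`. Since `χ·w₂ + r - χ₂ = χ₁ - t`, the two conditions on `χ₂`
repeat the two on `χ₁`, and all four say `χ₁ - k ≤ t ≤ χ₁`. As `χ < 0`, `t` sweeps out `(χ, 0)` when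
`w₁` sweeps out `(0, 1)`, so a polarization exists iff `[χ₁ - k, χ₁]` meets `(χ, 0)`, that is iff
`χ₁ - k < 0` and `χ < χ₁`. -/

/-- A polarization is a pair of rationals `(w₁, w₂)` with `0 < wᵢ < 1` and `w₁ + w₂ = 1`. -/
def IsPolarization (w₁ w₂ : ℚ) : Prop :=
  0 < w₁ ∧ w₁ < 1 ∧ 0 < w₂ ∧ w₂ < 1 ∧ w₁ + w₂ = 1

/-- The numerical conditions for `(r, k, χ₁, χ₂)` with respect to `(w₁, w₂)`,
where `χ = χ₁ + χ₂ - r`. -/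
def NumericalConditions (r k χ₁ χ₂ : ℤ) (w₁ w₂ : ℚ) : Prop :=
  ((χ₁ + χ₂ - r : ℤ) : ℚ) * w₁ ≤ (χ₁ : ℚ) ∧
  (χ₁ : ℚ) ≤ ((χ₁ + χ₂ - r : ℤ) : ℚ) * w₁ + (k : ℚ) ∧
  ((χ₁ + χ₂ - r : ℤ) : ℚ) * w₂ + (r : ℚ) - (k : ℚ) ≤ (χ₂ : ℚ) ∧
  (χ₂ : ℚ) ≤ ((χ₁ + χ₂ - r : ℤ) : ℚ) * w₂ + (r : ℚ)

open Set

theorem image_const_mul_Ioo_zero_one_of_neg {α : Type*} [Field α] [LinearOrder α]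
    [IsStrictOrderedRing α] {c : α} (hc : c < 0) : (c * ·) '' Ioo 0 1 = Ioo c 0 := by
  ext t
  constructor
  · rintro ⟨w, ⟨hw₀, hw₁⟩, rfl⟩
    exact ⟨by nlinarith, mul_neg_of_neg_of_pos hc hw₀⟩
  · rintro ⟨hct, ht₀⟩
    exact ⟨t / c, ⟨div_pos_of_neg_of_neg ht₀ hc, (div_lt_one_of_neg hc).2 hct⟩,
      mul_div_cancel₀ t hc.ne⟩

theorem Ioo_inter_Icc_nonempty_iff {α : Type*} [LinearOrder α] [DenselyOrdered α]
    {a b c d : α} (hab : a < b) (hcd : c < d) :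
    (Ioo a b ∩ Icc c d).Nonempty ↔ a < d ∧ c < b := by
  constructor
  · rintro ⟨x, ⟨hax, hxb⟩, hcx, hxd⟩
    exact ⟨hax.trans_le hxd, hcx.trans_lt hxb⟩
  · rintro ⟨had, hcb⟩
    have : (Ioo a b ∩ Ioo c d).Nonempty := by
      rw [Ioo_inter_Ioo, nonempty_Ioo]
      simp [*]
    exact this.mono (inter_subset_inter_right _ Ioo_subset_Icc_self)

theorem exists_isPolarization_iff {P : ℚ → ℚ → Prop} :
    (∃ w₁ w₂, IsPolarization w₁ w₂ ∧ P w₁ w₂) ↔ ∃ w ∈ Ioo (0 : ℚ) 1, P w (1 - w) := by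
  constructor
  · rintro ⟨w₁, w₂, ⟨hw₁₀, hw₁₁, -, -, hsum⟩, hP⟩
    obtain rfl : w₂ = 1 - w₁ := by linarith
    exact ⟨w₁, ⟨hw₁₀, hw₁₁⟩, hP⟩
  · rintro ⟨w, ⟨hw₀, hw₁⟩, hP⟩
    exact ⟨w, 1 - w, ⟨hw₀, hw₁, by linarith, by linarith, by ring⟩, hP⟩

theorem numericalConditions_one_sub_iff {r k χ₁ χ₂ : ℤ} {w : ℚ} :
    NumericalConditions r k χ₁ χ₂ w (1 - w) ↔
      ((χ₁ + χ₂ - r : ℤ) : ℚ) * w ∈ Icc ((χ₁ : ℚ) - k) χ₁ := by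
  unfold NumericalConditions
  push_cast
  constructor
  · rintro ⟨h₁, h₂, -, -⟩
    constructor <;> linarith
  · rintro ⟨h₁, h₂⟩
    refine ⟨?_, ?_, ?_, ?_⟩ <;> linarith

theorem existence_polarization_neg_chi_general (r k χ₁ χ₂ : ℤ)
    (hk1 : 1 ≤ k) (hχ : χ₁ + χ₂ - r < 0) :
    (∃ w₁ w₂ : ℚ, IsPolarization w₁ w₂ ∧ NumericalConditions r k χ₁ χ₂ w₁ w₂) ↔
      (χ₁ < k ∧ χ₂ < r) := by
  set χ : ℚ := ((χ₁ + χ₂ - r : ℤ) : ℚ)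
  have hχ₀ : χ < 0 := Int.cast_lt_zero.2 hχ
  have hk₀ : (χ₁ : ℚ) - k < χ₁ := sub_lt_self _ (Int.cast_pos.2 hk1)
  calc (∃ w₁ w₂ : ℚ, IsPolarization w₁ w₂ ∧ NumericalConditions r k χ₁ χ₂ w₁ w₂)
      ↔ ((χ * ·) '' Ioo 0 1 ∩ Icc ((χ₁ : ℚ) - k) χ₁).Nonempty := by
        rw [exists_isPolarization_iff, image_inter_nonempty_iff]
        simp only [numericalConditions_one_sub_iff]
        rfl
    _ ↔ χ < χ₁ ∧ (χ₁ : ℚ) - k < 0 := by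
        rw [image_const_mul_Ioo_zero_one_of_neg hχ₀, Ioo_inter_Icc_nonempty_iff hχ₀ hk₀]
    _ ↔ χ₁ < k ∧ χ₂ < r := by
        rw [Int.cast_lt, sub_neg, Int.cast_lt]
        omega

/-- The case `χ < 0` in the proof of Lemma 3.4: a suitable polarization exists iff
`χ₁ < k` and `χ₂ < r`. -/
theorem existence_polarization_neg_chi (r k χ₁ χ₂ : ℤ) (hr : 2 ≤ r)
    (hk1 : 1 ≤ k) (hkr : k ≤ r) (hχ : χ₁ + χ₂ - r < 0) :
    (∃ w₁ w₂ : ℚ, IsPolarization w₁ w₂ ∧ NumericalConditions r k χ₁ χ₂ w₁ w₂) ↔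
      (χ₁ < k ∧ χ₂ < r) :=
  existence_polarization_neg_chi_general r k χ₁ χ₂ hk1 hχ
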